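/- arXiv:2504.00314 — 6 statements merged into one kernel-verified Lean document; each statement's English description precedes it below -/
import Mathlib

section
/- Let d be a positive even integer and define H_k = F_{2 + d(k-1)} for k ≥ 1. Then H satisfies the recurrence H_{k+2} = K_d · H_{k+1} - H_k for all k ≥ 1. -/
/-- Lucas sequence: K 1 = 1, K 2 = 3, K (k+2) = K (k+1) + K k. -/
def lucas : ℕ → ℕ
  | 0 => 2
  | 1 => 1
  | n + 2 => lucas (n + 1) + lucas n

/-- The Chung–Graham rule of expansion for even interval `d`,
with `A = lucas d - 1` and `B = Nat.fib (2 + d) - 1`.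
Sequences are indexed from 1 (so `ε 0 = 0`) and finitely supported. -/
def CGRule (d : ℕ) (ε : ℕ → ℕ) : Prop :=
  ε 0 = 0 ∧
  {k | ε k ≠ 0}.Finite ∧
  ε 1 ≤ Nat.fib (2 + d) - 1 ∧
  (∀ k, 2 ≤ k → ε k ≤ lucas d - 1) ∧
  (∀ m, 2 ≤ m → ε m = lucas d - 1 →
    (∀ k, 2 ≤ k → k ≤ m - 1 → ε k = lucas d - 1 - 1) →
    ε 1 < Nat.fib (2 + d) - 1) ∧
  (∀ k j, 2 ≤ k → k < j → ε k = lucas d - 1 → ε j = lucas d - 1 →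
    ∃ c, k < c ∧ c < j ∧ ε c ≤ lucas d - 1 - 2)

/-- Lexicographic-from-the-right strict order on coefficient sequences. -/
def CGlt (ε τ : ℕ → ℕ) : Prop :=
  ∃ ℓ, ε ℓ < τ ℓ ∧ ∀ k, ℓ < k → ε k = τ k


lemma lucasZ : ∀ n, (lucas n : ℤ) = 2 * Nat.fib (n+1) - Nat.fib n := by
  intro n
  induction n using Nat.twoStepInduction with
  | zero => simp [lucas]
  | one => simp [lucas]
  | more n ih1 ih2 =>
    have h1 : Nat.fib (n+2) = Nat.fib n + Nat.fib (n+1) := Nat.fib_add_two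
    have h2 : Nat.fib (n+3) = Nat.fib (n+1) + Nat.fib (n+2) := Nat.fib_add_two
    rw [show lucas (n+2) = lucas (n+1) + lucas n from rfl]
    push_cast [h1, h2]
    push_cast at ih1 ih2
    linarith

lemma cassini : ∀ n, (Nat.fib (n+1) : ℤ)^2 - Nat.fib (n+1) * Nat.fib n - (Nat.fib n : ℤ)^2 = (-1)^n := by
  intro n
  induction n with
  | zero => simp
  | succ n ih =>
    have h1 : Nat.fib (n+2) = Nat.fib n + Nat.fib (n+1) := Nat.fib_add_two
    push_cast [h1, pow_succ]
    push_cast at ih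
    linarith

lemma mainlem (d : ℕ) : ∀ n, (Nat.fib (n + 2*d) : ℤ) =
    (lucas d : ℤ) * Nat.fib (n + d) - (-1)^d * Nat.fib n := by
  intro n
  induction n using Nat.twoStepInduction with
  | zero =>
    have h2 : Nat.fib (2*d) = Nat.fib d * (2 * Nat.fib (d+1) - Nat.fib d) := Nat.fib_two_mul d
    have hle : Nat.fib d ≤ 2 * Nat.fib (d+1) := by
      have := Nat.fib_le_fib_succ (n := d); omega
    have h2' : (Nat.fib (2*d) : ℤ) = Nat.fib d * (2 * Nat.fib (d+1) - Nat.fib d) := by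
      rw [h2]; push_cast [hle]; ring
    rw [lucasZ]
    simp [h2']; ring
  | one =>
    have h2 : Nat.fib (2*d+1) = Nat.fib (d+1)^2 + Nat.fib d ^ 2 := by
      have := Nat.fib_two_mul_add_one d
      simpa [pow_two] using this
    have hc := cassini d
    have hl := lucasZ d
    have : (1 : ℕ) + 2*d = 2*d+1 := by ring
    rw [this, h2]
    push_cast
    rw [show (1:ℕ) + d = d + 1 from by ring]
    rw [hl]
    simp [Nat.fib_one]
    linear_combination -hc
  | more n ih1 ih2 =>
    have e1 : n + 2 + 2*d = (n + 2*d) + 2 := by ring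
    have e2 : n + 2 + d = (n + d) + 2 := by ring
    have e3 : n + 1 + 2*d = (n + 2*d) + 1 := by ring
    have e4 : n + 1 + d = (n + d) + 1 := by ring
    rw [e1, e2, Nat.fib_add_two, Nat.fib_add_two (n := n + d), Nat.fib_add_two (n := n)]
    rw [e3, e4] at ih2
    push_cast
    push_cast at ih1 ih2
    linarith

theorem stmt_1 (d : ℕ) (hd : 0 < d) (hde : Even d) :
    ∀ k, 1 ≤ k →
      (Nat.fib (2 + d * (k + 1)) : ℤ) =
        (lucas d : ℤ) * Nat.fib (2 + d * k) - Nat.fib (2 + d * (k - 1)) := by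
  intro k hk
  obtain ⟨j, rfl⟩ := Nat.exists_eq_add_of_le hk
  have e0 : 1 + j - 1 = j := by omega
  have e1 : 2 + d * (1 + j + 1) = (2 + d * j) + 2 * d := by ring
  have e2 : 2 + d * (1 + j) = (2 + d * j) + d := by ring
  rw [e0, e1, e2, mainlem d (2 + d * j), hde.neg_one_pow]
  ring
end

section
/- Let d be a positive even integer, H_k = F_{2+d(k-1)}, A = K_d - 1, B = F_{2+d} - 1. Then for all n ≥ 1, 1 + eval(β^(n)) = H_{n+1}, where β^(1) = (B), β^(2) = (B-1, A), and for n ≥ 3, β^(n) = (B-1, A-1, A-1, ..., A-1, A) with n entries (first entry B-1, last entry A, and A-1 in between), and eval(ε) = Σ_k ε_k H_k. -/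
/-- The maximal coefficient sequence `β⁽ⁿ⁾` of order `n` (indexed from 1),
for `A = lucas d - 1`, `B = Nat.fib (2 + d) - 1`. -/
def cgBeta (d n : ℕ) : ℕ → ℕ := fun k =>
  if n = 1 then (if k = 1 then Nat.fib (2 + d) - 1 else 0)
  else if k = 1 then Nat.fib (2 + d) - 1 - 1
  else if k = n then lucas d - 1
  else if 2 ≤ k ∧ k ≤ n - 1 then lucas d - 1 - 1
  else 0
/-!
For even `d` the weights `H k = F (2 + d (k - 1))` satisfy `H (k + 2) + H k = K_d * H (k + 1)`,
an instance of `K_d F (m + d) = F (m + 2d) + (-1)^d F m`. Passing from `β⁽ⁿ⁾` to `β⁽ⁿ⁺¹⁾`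
lowers entry `n` by one and appends the entry `A = K_d - 1`, so the evaluation grows by
`A H (n + 1) - H n`, which by the recurrence carries `1 + eval β⁽ⁿ⁾ = H (n + 1)` to the next `n`.
-/

open Nat Finset

theorem lucas_add_two (n : ℕ) : lucas (n + 2) = lucas (n + 1) + lucas n := rfl

theorem lucas_mul_fib_add (d m : ℕ) :
    (lucas d * fib (m + d) : ℤ) = fib (m + 2 * d) + (-1) ^ d * fib m := by
  induction d using Nat.twoStepInduction generalizing m with
  | zero => simp [lucas]; ring
  | one => simp [lucas, fib_add_two]
  | more d ih ih' =>
    have h₁ := ih (m + 2)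
    have h₂ := ih' (m + 1)
    simp only [lucas_add_two, fib_add_two, Nat.cast_add, pow_succ] at h₁ h₂ ⊢
    rw [show m + (d + 2) = m + 2 + d by ring, show m + 2 * (d + 2) = m + 2 + 2 * d + 2 by ring]
    rw [show m + 1 + (d + 1) = m + 2 + d by ring,
      show m + 1 + 2 * (d + 1) = m + 2 + 2 * d + 1 by ring] at h₂
    have h₃ : (fib (m + 2 + 2 * d + 2) : ℤ) = fib (m + 2 + 2 * d) + fib (m + 2 + 2 * d + 1) := by
      exact_mod_cast fib_add_two
    linear_combination h₁ + h₂ - h₃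

theorem fib_add_two_mul_add_fib {d : ℕ} (hd : Even d) (m : ℕ) :
    fib (m + 2 * d) + fib m = lucas d * fib (m + d) := by
  have h := lucas_mul_fib_add d m
  rw [hd.neg_one_pow, one_mul] at h
  exact_mod_cast h.symm

theorem lucas_pos : ∀ n, 0 < lucas n
  | 0 | 1 => by decide
  | n + 2 => by rw [lucas_add_two]; have := lucas_pos n; omega

theorem two_le_lucas {d : ℕ} (hd : 2 ≤ d) : 2 ≤ lucas d := by
  obtain ⟨d, rfl⟩ := Nat.exists_eq_add_of_le' hd
  have := lucas_pos d
  have := lucas_pos (d + 1)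
  rw [lucas_add_two]; omega

theorem two_le_fib_two_add {d : ℕ} (hd : 1 ≤ d) : 2 ≤ fib (2 + d) :=
  calc 2 = fib 3 := rfl
    _ ≤ fib (2 + d) := fib_mono (by omega)

section cgBeta

variable (d : ℕ) {n k : ℕ}

theorem cgBeta_eq_zero_of_lt (hn : 1 ≤ n) (h : n < k) : cgBeta d n k = 0 := by
  unfold cgBeta; split_ifs <;> omega

theorem finsum_cgBeta_mul (hn : 1 ≤ n) (f : ℕ → ℕ) :
    ∑ᶠ k, cgBeta d n k * f k = ∑ k ∈ range (n + 1), cgBeta d n k * f k := by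
  refine finsum_eq_sum_of_support_subset _ fun k hk => ?_
  by_contra hkn
  simp only [coe_range, Set.mem_Iio, not_lt] at hkn
  exact hk (show cgBeta d n k * f k = 0 by rw [cgBeta_eq_zero_of_lt d hn hkn, zero_mul])

theorem cgBeta_succ_of_lt (hn : 1 ≤ n) (hk : k < n) : cgBeta d (n + 1) k = cgBeta d n k := by
  unfold cgBeta; split_ifs <;> omega

theorem cgBeta_succ_self (hn : 1 ≤ n) : cgBeta d (n + 1) (n + 1) = lucas d - 1 := by
  unfold cgBeta; split_ifs <;> omega

variable {d}

theorem cgBeta_succ_add_one (hd : 2 ≤ d) (hn : 1 ≤ n) :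
    cgBeta d (n + 1) n + 1 = cgBeta d n n := by
  have := two_le_lucas hd
  have := two_le_fib_two_add (by omega : 1 ≤ d)
  unfold cgBeta; split_ifs <;> omega

theorem finsum_cgBeta_succ_mul (hd : 2 ≤ d) (hn : 1 ≤ n) (f : ℕ → ℕ) :
    ∑ᶠ k, cgBeta d (n + 1) k * f k + f n =
      ∑ᶠ k, cgBeta d n k * f k + (lucas d - 1) * f (n + 1) := by
  rw [finsum_cgBeta_mul d (by omega), finsum_cgBeta_mul d hn, sum_range_succ, sum_range_succ,
    sum_range_succ,
    sum_congr rfl fun k hk => by rw [cgBeta_succ_of_lt d hn (mem_range.mp hk)],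
    cgBeta_succ_self d hn, ← cgBeta_succ_add_one hd hn]
  ring

end cgBeta

theorem stmt_4 (d : ℕ) (hd : 0 < d) (hde : Even d) :
    ∀ n, 1 ≤ n →
      1 + ∑ᶠ k, cgBeta d n k * Nat.fib (2 + d * (k - 1)) =
        Nat.fib (2 + d * n) := by
  have hd₂ : 2 ≤ d := by obtain ⟨k, rfl⟩ := hde; omega
  intro n hn
  induction n, hn using Nat.le_induction with
  | base =>
    rw [finsum_cgBeta_mul d le_rfl]
    simpa [cgBeta] using Nat.add_sub_cancel' (fib_pos.mpr (by omega : 0 < 2 + d))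
  | succ n hn ih =>
    obtain ⟨m, rfl⟩ := Nat.exists_eq_add_of_le' hn
    have hstep := finsum_cgBeta_succ_mul hd₂ hn fun k => fib (2 + d * (k - 1))
    have hrec := fib_add_two_mul_add_fib hde (2 + d * m)
    simp only [add_tsub_cancel_right] at hstep
    rw [show 2 + d * m + 2 * d = 2 + d * (m + 1 + 1) by ring,
      show 2 + d * m + d = 2 + d * (m + 1) by ring] at hrec
    rw [Nat.sub_one_mul] at hstep
    have := Nat.le_mul_of_pos_left (fib (2 + d * (m + 1))) (lucas_pos d)
    omega
end

section
/- Let d be a positive even integer, A = K_d - 1, B = F_{2+d} - 1, and let ℱ be the set of finitely supported sequences ε : ℕ → ℕ (indexed from 1) satisfying: (1) ε_1 ≤ B and ε_k ≤ A for all k ≥ 2; (2) if there exists m ≥ 2 with ε_m = A and ε_k = A-1 for all 2 ≤ k ≤ m-1, then ε_1 < B; (3) if ε_k = ε_j = A with 2 ≤ k < j, then there exists c with k < c < j and ε_c ≤ A-2. If ε ∈ ℱ has largest nonzero index at most ℓ, then Σ_k ε_k F_{2+d(k-1)} < F_{2+dℓ}. -/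
lemma lucas_add_fib : ∀ n, lucas n + Nat.fib n = 2 * Nat.fib (n+1)
  | 0 => by simp [lucas]
  | 1 => by simp [lucas]
  | n + 2 => by
    have h1 := lucas_add_fib (n+1)
    have h2 := lucas_add_fib n
    have e1 : Nat.fib (n+2) = Nat.fib n + Nat.fib (n+1) := Nat.fib_add_two
    have e2 : Nat.fib (n+2+1) = Nat.fib (n+1) + Nat.fib (n+1+1) := Nat.fib_add_two
    rw [lucas]
    omega

lemma lucas_ge_three {d : ℕ} (hd : 2 ≤ d) : 3 ≤ lucas d := by
  obtain ⟨e, rfl⟩ : ∃ e, d = e + 2 := ⟨d - 2, by omega⟩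
  have h := lucas_add_fib (e+2)
  have h2 : Nat.fib (e+2+1) = Nat.fib (e+1) + Nat.fib (e+2) := Nat.fib_add_two (n := e+1)
  have h3 : 1 ≤ Nat.fib (e+1) := Nat.fib_pos.2 (by omega)
  have h4 : 1 ≤ Nat.fib (e+2) := Nat.fib_pos.2 (by omega)
  omega

lemma cassiniZ : ∀ n, (Nat.fib (n+1) : ℤ)^2 - Nat.fib n * Nat.fib (n+2) = (-1)^n
  | 0 => by simp
  | n + 1 => by
    have h := cassiniZ n
    have hp : ((-1:ℤ))^(n+1) = -((-1)^n) := by rw [pow_succ]; ring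
    have h2 : (Nat.fib (n+1+1) : ℤ) = Nat.fib n + Nat.fib (n+1) := by
      exact_mod_cast congrArg (Nat.cast : ℕ → ℤ) (Nat.fib_add_two (n := n))
    have h3 : (Nat.fib (n+1+2) : ℤ) = Nat.fib (n+1) + Nat.fib (n+1+1) := by
      exact_mod_cast congrArg (Nat.cast : ℕ → ℤ) (Nat.fib_add_two (n := n+1))
    rw [hp, h3, h2]
    nlinarith [h]

lemma cassini_even {n : ℕ} (h : Even n) :
    Nat.fib (n+1)^2 = Nat.fib n * Nat.fib (n+2) + 1 := by
  have h1 := cassiniZ n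
  rw [h.neg_one_pow] at h1
  have : (Nat.fib (n+1):ℤ)^2 = (Nat.fib n : ℤ) * Nat.fib (n+2) + 1 := by linarith
  exact_mod_cast this

lemma fibrec {d : ℕ} (hde : Even d) :
    ∀ a, Nat.fib (a + 2*d) + Nat.fib a = lucas d * Nat.fib (a + d)
  | 0 => by
    have h := lucas_add_fib d
    have h2 := Nat.fib_two_mul d
    have h4 : lucas d = 2 * Nat.fib (d+1) - Nat.fib d := by omega
    rw [Nat.zero_add, Nat.fib_zero, Nat.add_zero, Nat.zero_add, h2, h4, Nat.mul_comm]
  | 1 => by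
    have h := lucas_add_fib d
    have h2 := Nat.fib_two_mul_add_one d
    have h3 := cassini_even hde
    have hfd : Nat.fib (d+2) = Nat.fib d + Nat.fib (d+1) := Nat.fib_add_two
    have e1 : 1 + 2*d = 2*d + 1 := by ring
    have e2 : 1 + d = d + 1 := by ring
    rw [e1, e2, h2, Nat.fib_one]
    nlinarith [h, h3, hfd]
  | a + 2 => by
    have h1 := fibrec hde a
    have h2 := fibrec hde (a+1)
    have e1 : a + 2 + 2*d = (a + 2*d) + 2 := by ring
    have e3 : a + 2 + d = (a + d) + 2 := by ring
    have e2 : a + 1 + 2*d = (a + 2*d) + 1 := by ring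
    have e4 : a + 1 + d = (a + d) + 1 := by ring
    rw [e2, e4] at h2
    have f1 : Nat.fib ((a + 2*d) + 2) = Nat.fib (a+2*d) + Nat.fib (a+2*d+1) := Nat.fib_add_two
    have f2 : Nat.fib (a + 2) = Nat.fib a + Nat.fib (a+1) := Nat.fib_add_two
    have f3 : lucas d * Nat.fib ((a+d)+2) = lucas d * Nat.fib (a+d) + lucas d * Nat.fib (a+d+1) := by
      rw [Nat.fib_add_two, Nat.mul_add]
    rw [e1, e3, f1, f2, f3]
    omega

lemma grec {d : ℕ} (hde : Even d) {k : ℕ} (hk : 2 ≤ k) :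
    Nat.fib (2 + d*k) + Nat.fib (2 + d*(k-2)) = lucas d * Nat.fib (2 + d*(k-1)) := by
  obtain ⟨m, rfl⟩ : ∃ m, k = m + 2 := ⟨k - 2, by omega⟩
  have h := fibrec hde (2 + d*m)
  have e1 : 2 + d*m + 2*d = 2 + d*(m+2) := by ring
  have e2 : 2 + d*m + d = 2 + d*(m+1) := by ring
  rw [e1, e2] at h
  have e3 : m + 2 - 2 = m := by omega
  have e4 : m + 2 - 1 = m + 1 := by omega
  rw [e3, e4]
  exact h

lemma truncCG {d : ℕ} (hd2 : 2 ≤ d) {ε : ℕ → ℕ} (hε : CGRule d ε) (c : ℕ) :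
    CGRule d (fun k => if k ≤ c then ε k else 0) := by
  obtain ⟨h0, hfin, h1, h2, h3, h4⟩ := hε
  have hA : 3 ≤ lucas d := lucas_ge_three hd2
  refine ⟨by simpa using h0, ?_, ?_, ?_, ?_, ?_⟩
  · apply hfin.subset
    intro k hk
    simp only [Set.mem_setOf_eq] at hk ⊢
    by_cases h : k ≤ c <;> simp [h] at hk ⊢; exact hk
  · by_cases h : 1 ≤ c <;> simp [h]; exact h1
  · intro k hk
    by_cases h : k ≤ c <;> simp [h]; exact h2 k hk
  · intro m hm hmA hall
    simp only at hmA hall ⊢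
    have hmc : m ≤ c := by
      by_contra hmc
      rw [if_neg (by omega)] at hmA
      omega
    rw [if_pos hmc] at hmA
    have := h3 m hm hmA (fun k hk1 hk2 => by
      have := hall k hk1 hk2
      rwa [if_pos (by omega)] at this)
    by_cases h : 1 ≤ c
    · rwa [if_pos h]
    · rw [if_neg h]
      have hf : 2 ≤ Nat.fib (2 + d) := by
        calc 2 = Nat.fib 3 := by norm_num
        _ ≤ Nat.fib (2 + d) := Nat.fib_mono (by omega)
      omega
  · intro k j hk hkj hkA hjA
    simp only at hkA hjA ⊢
    have hjc : j ≤ c := by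
      by_contra hjc
      rw [if_neg (by omega)] at hjA
      omega
    rw [if_pos hjc] at hjA
    rw [if_pos (by omega)] at hkA
    obtain ⟨c', hc1, hc2, hc3⟩ := h4 k j hk hkj hkA hjA
    exact ⟨c', hc1, hc2, by rw [if_pos (by omega)]; exact hc3⟩

lemma tele {d : ℕ} (hde : Even d) (hd2 : 2 ≤ d) {a : ℕ} (ha : 1 ≤ a) :
    ∀ m, a ≤ m →
    (∑ k ∈ Finset.Ico (a+1) (m+1), (lucas d - 1 - 1) * Nat.fib (2 + d*(k-1)))
      + Nat.fib (2 + d*a) + Nat.fib (2 + d*(m-1))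
      = Nat.fib (2 + d*m) + Nat.fib (2 + d*(a-1)) := by
  intro m hm
  induction m, hm using Nat.le_induction with
  | base =>
    rw [Finset.Ico_self, Finset.sum_empty, Nat.zero_add]
  | succ m hm IH =>
    rw [Finset.sum_Ico_succ_top (by omega)]
    have e1 : m + 1 - 1 = m := by omega
    rw [e1]
    have hg := grec hde (k := m + 1) (by omega)
    have e2 : m + 1 - 2 = m - 1 := by omega
    have e3 : m + 1 - 1 = m := by omega
    rw [e2, e3] at hg
    have hx : (lucas d - 1 - 1) * Nat.fib (2 + d*m) + 2 * Nat.fib (2 + d*m)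
        = lucas d * Nat.fib (2 + d*m) := by
      rw [← Nat.add_mul]
      have : lucas d - 1 - 1 + 2 = lucas d := by have := lucas_ge_three hd2; omega
      rw [this]
    omega

lemma mainlem_s6 {d : ℕ} (hd2 : 2 ≤ d) (hde : Even d) :
    ∀ ℓ : ℕ, ∀ ε : ℕ → ℕ, CGRule d ε → (∀ k, ℓ < k → ε k = 0) →
    ∑ k ∈ Finset.range (ℓ+1), ε k * Nat.fib (2 + d*(k-1)) < Nat.fib (2 + d*ℓ) := by
  intro ℓ
  induction ℓ using Nat.strong_induction_on with
  | _ ℓ IH =>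
  intro ε hε hsupp
  have hA := lucas_ge_three hd2
  have hf2 : 2 ≤ Nat.fib (2 + d) := by
    calc 2 = Nat.fib 3 := by norm_num
    _ ≤ Nat.fib (2 + d) := Nat.fib_mono (by omega)
  have htr : ∀ c, c < ℓ →
      ∑ k ∈ Finset.range (c+1), ε k * Nat.fib (2 + d*(k-1)) < Nat.fib (2 + d*c) := by
    intro c hc
    have h1' := IH c hc (fun k => if k ≤ c then ε k else 0) (truncCG hd2 hε c)
      (fun k hk => if_neg (by omega))
    calc ∑ k ∈ Finset.range (c+1), ε k * Nat.fib (2 + d*(k-1))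
        = ∑ k ∈ Finset.range (c+1), (if k ≤ c then ε k else 0) * Nat.fib (2 + d*(k-1)) := by
          refine Finset.sum_congr rfl fun k hk => ?_
          rw [if_pos (by simp only [Finset.mem_range] at hk; omega)]
      _ < _ := h1'
  match ℓ with
  | 0 =>
    rw [show (0:ℕ)+1 = 1 from rfl, Finset.sum_range_one, hε.1, Nat.zero_mul]
    exact Nat.fib_pos.2 (by omega)
  | 1 =>
    have h1 := hε.2.2.1
    rw [Finset.sum_range_succ, Finset.sum_range_one, hε.1, Nat.zero_mul, Nat.zero_add]
    rw [show 2 + d * (1 - 1) = 2 by norm_num, Nat.fib_two, Nat.mul_one,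
      show 2 + d * 1 = 2 + d by ring]
    omega
  | n + 2 =>
    rw [Finset.sum_range_succ]
    have e1 : n + 2 - 1 = n + 1 := rfl
    rw [e1]
    have hgl := grec hde (k := n+2) (by omega)
    have e2 : n + 2 - 2 = n := rfl
    rw [e2, e1] at hgl
    have hmono : Nat.fib (2 + d*n) ≤ Nat.fib (2 + d*(n+1)) :=
      Nat.fib_mono (by have : d*n ≤ d*(n+1) := Nat.mul_le_mul_left d (by omega); omega)
    by_cases hεL : ε (n+2) = lucas d - 1
    · -- top coefficient is maximal
      by_cases hall : ∀ k, 2 ≤ k → k ≤ n + 2 - 1 → ε k = lucas d - 1 - 1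
      · -- B1: all middle coefficients are A - 1
        have hε1 : ε 1 < Nat.fib (2 + d) - 1 := hε.2.2.2.2.1 (n+2) (by omega) hεL hall
        have hsplit : ∑ k ∈ Finset.range (n+2), ε k * Nat.fib (2 + d*(k-1))
            = (ε 0 * Nat.fib (2 + d*(0-1)) + ε 1 * Nat.fib (2 + d*(1-1)))
              + ∑ k ∈ Finset.Ico 2 (n+2), ε k * Nat.fib (2 + d*(k-1)) := by
          rw [Finset.range_eq_Ico,
            ← Finset.sum_Ico_consecutive _ (by omega : 0 ≤ 2) (by omega : 2 ≤ n+2),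
            ← Finset.range_eq_Ico, Finset.sum_range_succ, Finset.sum_range_one]
        have hmid : ∑ k ∈ Finset.Ico 2 (n+2), ε k * Nat.fib (2 + d*(k-1))
            = ∑ k ∈ Finset.Ico 2 (n+2), (lucas d - 1 - 1) * Nat.fib (2 + d*(k-1)) := by
          refine Finset.sum_congr rfl fun k hk => ?_
          rw [Finset.mem_Ico] at hk
          rw [hall k hk.1 (by omega)]
        have htel := tele hde hd2 (a := 1) le_rfl (n+1) (by omega)
        have e3 : (1:ℕ) + 1 = 2 := rfl
        have e4 : n + 1 + 1 = n + 2 := rfl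
        have e5 : n + 1 - 1 = n := rfl
        have e6 : (1:ℕ) - 1 = 0 := rfl
        rw [e3, e4, e5, e6, Nat.mul_zero, Nat.mul_one] at htel
        have hfib2 : Nat.fib (2 + 0) = 1 := rfl
        rw [hfib2] at htel
        have hA2 : (lucas d - 1) * Nat.fib (2 + d*(n+1)) + Nat.fib (2 + d*(n+1))
            = lucas d * Nat.fib (2 + d*(n+1)) := by
          have e : lucas d - 1 + 1 = lucas d := by omega
          calc (lucas d - 1) * Nat.fib (2 + d*(n+1)) + Nat.fib (2 + d*(n+1))
              = (lucas d - 1 + 1) * Nat.fib (2 + d*(n+1)) := by ring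
            _ = lucas d * Nat.fib (2 + d*(n+1)) := by rw [e]
        rw [hsplit, hmid, hε.1, Nat.zero_mul, Nat.zero_add,
          show 2 + d * (1 - 1) = 2 by norm_num, Nat.fib_two, Nat.mul_one, hεL]
        omega
      · -- B2: some middle coefficient differs from A - 1
        push_neg at hall
        obtain ⟨k0, hk01, hk02, hk03⟩ := hall
        classical
        set P : ℕ → Prop := fun k => 2 ≤ k ∧ ε k ≠ lucas d - 1 - 1 with hP
        set c := Nat.findGreatest P (n+1) with hcdef
        have hPc : P c := Nat.findGreatest_spec (by omega : k0 ≤ n+1) ⟨hk01, hk03⟩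
        obtain ⟨hc2, hcne⟩ := hPc
        have hcle : c ≤ n + 1 := Nat.findGreatest_le _
        have hcmax : ∀ k, c < k → k ≤ n + 1 → ε k = lucas d - 1 - 1 := by
          intro k h1 h2
          have hnp := Nat.findGreatest_is_greatest (n := n+1) (P := P) h1 h2
          simp only [hP] at hnp
          push_neg at hnp
          exact hnp (le_trans hc2 (Nat.le_of_lt h1))
        have hεc : ε c ≤ lucas d - 1 - 2 := by
          by_contra hcon
          have hub := hε.2.2.2.1 c hc2
          have hceq : ε c = lucas d - 1 := by
            revert hcne hub hcon hA
            omega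
          obtain ⟨c', h1', h2', h3'⟩ := hε.2.2.2.2.2 c (n+2) hc2 (by omega) hceq hεL
          have := hcmax c' (by omega) (by omega)
          omega
        -- decompose the sum
        have hsplit : ∑ k ∈ Finset.range (n+2), ε k * Nat.fib (2 + d*(k-1))
            = (∑ k ∈ Finset.range c, ε k * Nat.fib (2 + d*(k-1))
                + ε c * Nat.fib (2 + d*(c-1)))
              + ∑ k ∈ Finset.Ico (c+1) (n+2), ε k * Nat.fib (2 + d*(k-1)) := by
          rw [Finset.range_eq_Ico,
            ← Finset.sum_Ico_consecutive _ (by omega : 0 ≤ c+1) (by omega : c+1 ≤ n+2),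
            ← Finset.range_eq_Ico, Finset.sum_range_succ]
        have hmid : ∑ k ∈ Finset.Ico (c+1) (n+2), ε k * Nat.fib (2 + d*(k-1))
            = ∑ k ∈ Finset.Ico (c+1) (n+2), (lucas d - 1 - 1) * Nat.fib (2 + d*(k-1)) := by
          refine Finset.sum_congr rfl fun k hk => ?_
          rw [Finset.mem_Ico] at hk
          rw [hcmax k hk.1 (by omega)]
        have htel := tele hde hd2 (a := c) (by omega) (n+1) (by omega)
        have e4 : n + 1 + 1 = n + 2 := rfl
        have e5 : n + 1 - 1 = n := rfl
        rw [e4, e5] at htel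
        have hlow : ∑ k ∈ Finset.range c, ε k * Nat.fib (2 + d*(k-1))
            < Nat.fib (2 + d*(c-1)) := by
          have := htr (c-1) (by omega)
          have ec : c - 1 + 1 = c := by omega
          rwa [ec] at this
        have hgc := grec hde (k := c) hc2
        have hmulc : ε c * Nat.fib (2 + d*(c-1)) + 3 * Nat.fib (2 + d*(c-1))
            ≤ lucas d * Nat.fib (2 + d*(c-1)) := by
          rw [← Nat.add_mul]
          exact Nat.mul_le_mul_right _ (by omega)
        have hA2 : (lucas d - 1) * Nat.fib (2 + d*(n+1)) + Nat.fib (2 + d*(n+1))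
            = lucas d * Nat.fib (2 + d*(n+1)) := by
          have e : lucas d - 1 + 1 = lucas d := by omega
          calc (lucas d - 1) * Nat.fib (2 + d*(n+1)) + Nat.fib (2 + d*(n+1))
              = (lucas d - 1 + 1) * Nat.fib (2 + d*(n+1)) := by ring
            _ = lucas d * Nat.fib (2 + d*(n+1)) := by rw [e]
        have hmonoc : Nat.fib (2 + d*(c-2)) ≤ Nat.fib (2 + d*(c-1)) :=
          Nat.fib_mono (by have : d*(c-2) ≤ d*(c-1) := Nat.mul_le_mul_left d (by omega); omega)
        rw [hsplit, hmid, hεL]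
        omega
    · -- case A : top coefficient below maximum
      have hb := hε.2.2.2.1 (n+2) (by omega)
      have hmul : ε (n+2) * Nat.fib (2 + d*(n+1)) + 2 * Nat.fib (2 + d*(n+1))
          ≤ lucas d * Nat.fib (2 + d*(n+1)) := by
        rw [← Nat.add_mul]
        exact Nat.mul_le_mul_right _ (by omega)
      have hprev := htr (n+1) (by omega)
      rw [show n + 1 + 1 = n + 2 from rfl] at hprev
      omega

theorem stmt_6 (d : ℕ) (hd : 0 < d) (hde : Even d) (ε : ℕ → ℕ) (ℓ : ℕ)
    (hℓ : 1 ≤ ℓ) (hε : CGRule d ε) (hsupp : ∀ k, ℓ < k → ε k = 0) :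
    ∑ᶠ k, ε k * Nat.fib (2 + d * (k - 1)) < Nat.fib (2 + d * ℓ) := by
  have hd2 : 2 ≤ d := by
    rcases hde with ⟨r, rfl⟩; omega
  have hsub : Function.support (fun k => ε k * Nat.fib (2 + d * (k - 1)))
      ⊆ ↑(Finset.range (ℓ+1)) := by
    intro k hk
    simp only [Function.mem_support, Finset.coe_range, Set.mem_Iio] at hk ⊢
    by_contra h
    push_neg at h
    rw [hsupp k (by omega)] at hk
    simp at hk
  rw [finsum_eq_sum_of_support_subset _ hsub]
  exact mainlem_s6 hd2 hde ℓ ε hε hsupp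
end

section
/- Every positive integer n can be written uniquely as n = Σ_k ε_k · F_{2k} where ε_k ∈ {0,1,2}, only finitely many ε_k are nonzero, and whenever ε_k = ε_j = 2 with k < j there exists i with k < i < j and ε_i = 0. -/
/-- Admissibility of a coefficient sequence. -/
def Adm (ε : ℕ → ℕ) : Prop :=
  ε 0 = 0 ∧ (∀ k, ε k ≤ 2) ∧
  ∀ k j, 1 ≤ k → k < j → ε k = 2 → ε j = 2 → ∃ i, k < i ∧ i < j ∧ ε i = 0

/-- Partial sum up to index m. -/
def S (m : ℕ) (ε : ℕ → ℕ) : ℕ := ∑ k ∈ Finset.range (m+1), ε k * Nat.fib (2*k)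

def tr (m : ℕ) (ε : ℕ → ℕ) : ℕ → ℕ := fun k => if k ≤ m then ε k else 0

lemma fib_step (a : ℕ) : Nat.fib (a+2) = Nat.fib a + Nat.fib (a+1) := Nat.fib_add_two

lemma fib_step' (a b c : ℕ) (h1 : b = a+1) (h2 : c = a+2) :
    Nat.fib c = Nat.fib a + Nat.fib b := by subst h1; subst h2; exact Nat.fib_add_two

lemma S_congr {m : ℕ} {ε τ : ℕ → ℕ} (h : ∀ k, k ≤ m → ε k = τ k) : S m ε = S m τ := by
  unfold S
  refine Finset.sum_congr rfl fun k hk => ?_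
  rw [h k (by simpa using Nat.lt_succ_iff.mp (Finset.mem_range.mp hk))]

lemma S_tr (m : ℕ) (ε : ℕ → ℕ) : S m (tr m ε) = S m ε :=
  S_congr fun k hk => by simp [tr, hk]

lemma S_succ (m : ℕ) (ε : ℕ → ℕ) : S (m+1) ε = S m ε + ε (m+1) * Nat.fib (2*m+2) := by
  unfold S; rw [Finset.sum_range_succ, (show 2*(m+1) = 2*m+2 by ring)]

lemma tr_adm {m : ℕ} {ε : ℕ → ℕ} (h : Adm ε) : Adm (tr m ε) := by
  obtain ⟨h0, h2, hp⟩ := h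
  refine ⟨by simp [tr, h0], fun k => ?_, fun k j hk hkj hek hej => ?_⟩
  · by_cases hkm : k ≤ m <;> simp [tr, hkm, h2 k]
  · have hjm : j ≤ m := by
      by_contra hjm; simp [tr, hjm] at hej
    have hkm : k ≤ m := le_trans (le_of_lt hkj) hjm
    simp only [tr, if_pos hjm, if_pos hkm] at hek hej
    obtain ⟨i, hi1, hi2, hi3⟩ := hp k j hk hkj hek hej
    exact ⟨i, hi1, hi2, by simp [tr, (by omega : i ≤ m), hi3]⟩

lemma tr_supp (m : ℕ) (ε : ℕ → ℕ) : ∀ k, m < k → tr m ε k = 0 := by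
  intro k hk; simp [tr, Nat.not_le.mpr hk]

lemma sumfib (m : ℕ) : (∑ k ∈ Finset.range (m+1), Nat.fib (2*k)) + 1 = Nat.fib (2*m+1) := by
  induction m with
  | zero => simp
  | succ m ih =>
    rw [Finset.sum_range_succ]
    have h3 := fib_step' (2*m+1) (2*m+2) (2*m+2+1) (by ring) (by ring)
    rw [(show 2*(m+1) = 2*m+2 by ring)]
    omega

lemma fib_big (t : ℕ) : t + 1 ≤ Nat.fib (t+2) := by
  induction t with
  | zero => simp
  | succ t ih =>
    have h1 : 1 ≤ Nat.fib (t+1) := Nat.fib_pos.mpr (by omega)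
    have h2 : Nat.fib (t+1+2) = Nat.fib (t+1) + Nat.fib (t+2) :=
      fib_step' (t+1) (t+2) (t+1+2) (by ring) (by ring)
    omega

/-- Mutual bound lemma. -/
lemma bounds : ∀ m : ℕ,
    (∀ ε, Adm ε → (∀ k, m < k → ε k = 0) → S m ε < Nat.fib (2*m+2)) ∧
    (∀ ε, Adm ε → (∀ k, m < k → ε k = 0) →
      (∀ k, 1 ≤ k → ε k = 2 → ∃ c, k < c ∧ c ≤ m ∧ ε c = 0) → S m ε < Nat.fib (2*m+1)) := by
  intro m
  induction m with
  | zero =>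
    constructor
    · intro ε hA hs; simp [S, hA.1]
    · intro ε hA hs hz; simp [S, hA.1]
  | succ m ih =>
    obtain ⟨ihL, ihR⟩ := ih
    have hfib3 : Nat.fib (2*m+3) = Nat.fib (2*m+1) + Nat.fib (2*m+2) :=
      fib_step' (2*m+1) (2*m+2) (2*m+3) (by ring) (by ring)
    have hfib4 : Nat.fib (2*m+4) = Nat.fib (2*m+2) + Nat.fib (2*m+3) :=
      fib_step' (2*m+2) (2*m+3) (2*m+4) (by ring) (by ring)
    have hmono : Nat.fib (2*m+1) ≤ Nat.fib (2*m+2) := Nat.fib_mono (by omega)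
    have hidx2 : 2*(m+1)+2 = 2*m+4 := by ring
    have hidx1 : 2*(m+1)+1 = 2*m+3 := by ring
    constructor
    · intro ε hA hs
      rw [S_succ, hidx2]
      have htrS : S m (tr m ε) = S m ε := S_tr m ε
      have htrA : Adm (tr m ε) := tr_adm hA
      rcases Nat.lt_or_ge (ε (m+1)) 2 with h1 | h2
      · have hb := ihL (tr m ε) htrA (tr_supp m ε)
        rw [htrS] at hb
        have hle : ε (m+1) * Nat.fib (2*m+2) ≤ 1 * Nat.fib (2*m+2) :=
          Nat.mul_le_mul_right _ (by omega)
        rw [one_mul] at hle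
        omega
      · have he2 : ε (m+1) = 2 := le_antisymm (hA.2.1 _) h2
        have hb := ihR (tr m ε) htrA (tr_supp m ε) ?_
        · rw [htrS] at hb
          rw [he2]
          omega
        · intro k hk hek
          have hkm : k ≤ m := by
            by_contra hkm; simp [tr, hkm] at hek
          simp only [tr, if_pos hkm] at hek
          obtain ⟨i, hi1, hi2, hi3⟩ := hA.2.2 k (m+1) hk (by omega) hek he2
          exact ⟨i, hi1, by omega, by simp [tr, (by omega : i ≤ m), hi3]⟩
    · intro ε hA hs hz
      rw [S_succ, hidx1]
      have htrS : S m (tr m ε) = S m ε := S_tr m ε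
      have htrA : Adm (tr m ε) := tr_adm hA
      have hub : ε (m+1) ≤ 2 := hA.2.1 _
      interval_cases he : ε (m+1)
      · have hb := ihL (tr m ε) htrA (tr_supp m ε)
        rw [htrS] at hb
        omega
      · have hb := ihR (tr m ε) htrA (tr_supp m ε) ?_
        · rw [htrS] at hb
          omega
        · intro k hk hek
          have hkm : k ≤ m := by
            by_contra hkm; simp [tr, hkm] at hek
          simp only [tr, if_pos hkm] at hek
          obtain ⟨c, hc1, hc2, hc3⟩ := hz k hk hek
          have hcm : c ≤ m := by
            rcases Nat.lt_or_ge c (m+1) with h | h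
            · omega
            · exfalso
              have hcc : c = m+1 := by omega
              rw [hcc] at hc3; omega
          exact ⟨c, hc1, hcm, by simp [tr, hcm, hc3]⟩
      · exact absurd (hz (m+1) (by omega) he) (by rintro ⟨c, hc1, hc2, -⟩; omega)

lemma lb (k : ℕ) (hk : 1 ≤ k) : ∀ m, k ≤ m →
    Nat.fib (2*m+1) ≤ 2 * Nat.fib (2*k) + ∑ i ∈ Finset.Icc (k+1) m, Nat.fib (2*i) := by
  intro m hkm
  induction m, hkm using Nat.le_induction with
  | base =>
    rw [Finset.Icc_eq_empty (by omega), Finset.sum_empty]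
    have h1 := fib_step' (2*k-1) (2*k) (2*k+1) (by omega) (by omega)
    have h2 : Nat.fib (2*k-1) ≤ Nat.fib (2*k) := Nat.fib_mono (by omega)
    omega
  | succ m hm ih =>
    rw [Finset.sum_Icc_succ_top (by omega)]
    have h1 := fib_step' (2*m+1) (2*(m+1)) (2*(m+1)+1) (by ring) (by ring)
    omega

lemma noZero (m k : ℕ) (ε : ℕ → ℕ) (hk : 1 ≤ k) (hkm : k ≤ m) (h2 : ε k = 2)
    (hnz : ∀ c, k < c → c ≤ m → ε c ≠ 0) : Nat.fib (2*m+1) ≤ S m ε := by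
  have hsub : Finset.Icc k m ⊆ Finset.range (m+1) := by
    intro x hx; rw [Finset.mem_Icc] at hx; rw [Finset.mem_range]; omega
  have h1 : ∑ i ∈ Finset.Icc k m, ε i * Nat.fib (2*i) ≤ S m ε :=
    Finset.sum_le_sum_of_subset hsub
  have hins : Finset.Icc k m = insert k (Finset.Icc (k+1) m) := by
    ext x; simp only [Finset.mem_Icc, Finset.mem_insert]; omega
  have hnotmem : k ∉ Finset.Icc (k+1) m := by
    simp only [Finset.mem_Icc]; omega
  have h3 : 2 * Nat.fib (2*k) + ∑ i ∈ Finset.Icc (k+1) m, Nat.fib (2*i) ≤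
      ∑ i ∈ Finset.Icc k m, ε i * Nat.fib (2*i) := by
    rw [hins, Finset.sum_insert hnotmem, h2]
    refine Nat.add_le_add_left (Finset.sum_le_sum fun i hi => ?_) _
    rw [Finset.mem_Icc] at hi
    have hpos : 0 < ε i := Nat.pos_of_ne_zero (hnz i (by omega) hi.2)
    exact Nat.le_mul_of_pos_left _ hpos
  exact le_trans (lb k hk m hkm) (le_trans h3 h1)

lemma exist : ∀ m n, n < Nat.fib (2*m+2) → ∃ ε, Adm ε ∧ (∀ k, m < k → ε k = 0) ∧ S m ε = n := by
  intro m
  induction m with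
  | zero =>
    intro n hn
    have hfib2 : Nat.fib (2*0+2) = 1 := rfl
    refine ⟨fun _ => 0, ⟨rfl, fun _ => by norm_num, fun k j _ _ h => by norm_num at h⟩,
      fun _ _ => rfl, ?_⟩
    simp [S]; omega
  | succ m ih =>
    intro n hn
    set q := Nat.fib (2*m+2) with hq
    have hf3 : Nat.fib (2*m+3) = Nat.fib (2*m+1) + Nat.fib (2*m+2) :=
      fib_step' (2*m+1) (2*m+2) (2*m+3) (by ring) (by ring)
    have hf4 : Nat.fib (2*(m+1)+2) = Nat.fib (2*m+2) + Nat.fib (2*m+3) :=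
      fib_step' (2*m+2) (2*m+3) (2*(m+1)+2) (by ring) (by ring)
    have hmono : Nat.fib (2*m+1) ≤ Nat.fib (2*m+2) := Nat.fib_mono (by omega)
    rcases Nat.lt_or_ge n q with h1 | h1
    · obtain ⟨ε, hA, hs, hS⟩ := ih n h1
      refine ⟨ε, hA, fun k hk => hs k (by omega), ?_⟩
      rw [S_succ, hs (m+1) (by omega), hS]; ring
    · rcases Nat.lt_or_ge n (2*q) with h2 | h2
      · obtain ⟨ε', hA', hs', hS'⟩ := ih (n - q) (by omega)
        refine ⟨fun k => if k = m+1 then 1 else ε' k, ⟨?_, ?_, ?_⟩, ?_, ?_⟩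
        · simp only [if_neg (by omega : (0:ℕ) ≠ m+1)]; exact hA'.1
        · intro k; by_cases hk : k = m+1 <;> simp [hk, hA'.2.1 k]
        · intro k j hk hkj hek hej
          replace hek : (if k = m+1 then 1 else ε' k) = 2 := hek
          replace hej : (if j = m+1 then 1 else ε' j) = 2 := hej
          have hkne : k ≠ m+1 := by intro h; rw [if_pos h] at hek; omega
          have hjne : j ≠ m+1 := by intro h; rw [if_pos h] at hej; omega
          rw [if_neg hkne] at hek; rw [if_neg hjne] at hej
          have hjm : j ≤ m := by by_contra hjm; rw [hs' j (by omega)] at hej; omega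
          obtain ⟨i, hi1, hi2, hi3⟩ := hA'.2.2 k j hk hkj hek hej
          refine ⟨i, hi1, hi2, ?_⟩
          show (if i = m+1 then 1 else ε' i) = 0
          rw [if_neg (by omega : i ≠ m+1)]; exact hi3
        · intro k hk
          show (if k = m+1 then 1 else ε' k) = 0
          rw [if_neg (by omega : k ≠ m+1)]; exact hs' k (by omega)
        · rw [S_succ,
            show (if m + 1 = m + 1 then 1 else ε' (m + 1)) = 1 from if_pos rfl,
            S_congr (τ := ε') fun k hk => if_neg (by omega)]
          rw [hS']; omega
      · have hn' : n - 2*q < Nat.fib (2*m+1) := by omega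
        obtain ⟨ε', hA', hs', hS'⟩ := ih (n - 2*q) (by omega)
        refine ⟨fun k => if k = m+1 then 2 else ε' k, ⟨?_, ?_, ?_⟩, ?_, ?_⟩
        · simp only [if_neg (by omega : (0:ℕ) ≠ m+1)]; exact hA'.1
        · intro k; by_cases hk : k = m+1 <;> simp [hk, hA'.2.1 k]
        · intro k j hk hkj hek hej
          replace hek : (if k = m+1 then 2 else ε' k) = 2 := hek
          replace hej : (if j = m+1 then 2 else ε' j) = 2 := hej
          by_cases hjne : j = m+1
          · have hkne : k ≠ m+1 := by omega
            rw [if_neg hkne] at hek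
            have hkm : k ≤ m := by by_contra hkm; rw [hs' k (by omega)] at hek; omega
            by_contra hno
            push_neg at hno
            have hlow : Nat.fib (2*m+1) ≤ S m ε' := by
              refine noZero m k ε' hk hkm hek fun c hc1 hc2 hc0 => ?_
              have hcc := hno c hc1 (by omega)
              replace hcc : ¬ (if c = m+1 then 2 else ε' c) = 0 := hcc
              rw [if_neg (by omega : c ≠ m+1)] at hcc
              exact hcc hc0
            omega
          · by_cases hkne : k = m+1
            · rw [if_neg hjne] at hej
              rw [hs' j (by omega)] at hej; omega
            · rw [if_neg hkne] at hek; rw [if_neg hjne] at hej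
              have hjm : j ≤ m := by by_contra hjm; rw [hs' j (by omega)] at hej; omega
              obtain ⟨i, hi1, hi2, hi3⟩ := hA'.2.2 k j hk hkj hek hej
              refine ⟨i, hi1, hi2, ?_⟩
              show (if i = m+1 then 2 else ε' i) = 0
              rw [if_neg (by omega : i ≠ m+1)]; exact hi3
        · intro k hk
          show (if k = m+1 then 2 else ε' k) = 0
          rw [if_neg (by omega : k ≠ m+1)]; exact hs' k (by omega)
        · rw [S_succ,
            show (if m + 1 = m + 1 then 2 else ε' (m + 1)) = 2 from if_pos rfl,
            S_congr (τ := ε') fun k hk => if_neg (by omega)]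
          rw [hS']; omega

lemma uniq : ∀ m ε τ, Adm ε → (∀ k, m < k → ε k = 0) → Adm τ → (∀ k, m < k → τ k = 0) →
    S m ε = S m τ → ε = τ := by
  intro m
  induction m with
  | zero =>
    intro ε τ hAε hsε hAτ hsτ _
    funext k
    rcases Nat.eq_zero_or_pos k with hk | hk
    · rw [hk, hAε.1, hAτ.1]
    · rw [hsε k hk, hsτ k hk]
  | succ m ih =>
    intro ε τ hAε hsε hAτ hsτ hS
    have hbε : S m ε < Nat.fib (2*m+2) := by
      rw [← S_tr m ε]; exact (bounds m).1 _ (tr_adm hAε) (tr_supp _ _)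
    have hbτ : S m τ < Nat.fib (2*m+2) := by
      rw [← S_tr m τ]; exact (bounds m).1 _ (tr_adm hAτ) (tr_supp _ _)
    rw [S_succ, S_succ] at hS
    have heq : ε (m+1) = τ (m+1) := by
      rcases Nat.lt_trichotomy (ε (m+1)) (τ (m+1)) with h | h | h
      · exfalso
        have hle : (ε (m+1) + 1) * Nat.fib (2*m+2) ≤ τ (m+1) * Nat.fib (2*m+2) :=
          Nat.mul_le_mul_right _ (by omega)
        rw [add_mul, one_mul] at hle
        omega
      · exact h
      · exfalso
        have hle : (τ (m+1) + 1) * Nat.fib (2*m+2) ≤ ε (m+1) * Nat.fib (2*m+2) :=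
          Nat.mul_le_mul_right _ (by omega)
        rw [add_mul, one_mul] at hle
        omega
    have hSm : S m ε = S m τ := by rw [heq] at hS; omega
    have htr : tr m ε = tr m τ :=
      ih _ _ (tr_adm hAε) (tr_supp _ _) (tr_adm hAτ) (tr_supp _ _)
        (by rw [S_tr, S_tr]; exact hSm)
    funext k
    rcases Nat.lt_or_ge k (m+1) with hk | hk
    · have := congrFun htr k
      simpa [tr, (by omega : k ≤ m)] using this
    · rcases Nat.eq_or_lt_of_le hk with hk2 | hk2
      · rw [← hk2]; exact heq
      · rw [hsε k hk2, hsτ k hk2]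

lemma finsum_eq_S (m : ℕ) (τ : ℕ → ℕ) (h : ∀ k, m < k → τ k = 0) :
    ∑ᶠ k, τ k * Nat.fib (2*k) = S m τ := by
  refine finsum_eq_sum_of_support_subset _ (s := Finset.range (m+1)) ?_
  intro x hx
  simp only [Function.mem_support] at hx
  simp only [Finset.coe_range, Set.mem_Iio]
  by_contra hc
  push_neg at hc
  rw [h x (by omega)] at hx
  simp at hx

theorem stmt_11 (n : ℕ) (hn : 1 ≤ n) :
    ∃! ε : ℕ → ℕ,
      ε 0 = 0 ∧
      {k | ε k ≠ 0}.Finite ∧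
      (∀ k, ε k ≤ 2) ∧
      (∀ k j, 1 ≤ k → k < j → ε k = 2 → ε j = 2 → ∃ i, k < i ∧ i < j ∧ ε i = 0) ∧
      n = ∑ᶠ k, ε k * Nat.fib (2 * k) := by
  have hn2 : n < Nat.fib (2*n+2) := by have := fib_big (2*n); omega
  obtain ⟨ε, hA, hs, hS⟩ := exist n n hn2
  refine ⟨ε, ⟨hA.1, ?_, hA.2.1, hA.2.2, ?_⟩, ?_⟩
  · refine Set.Finite.subset (Finset.range (n+1)).finite_toSet fun k hk => ?_
    simp only [Set.mem_setOf_eq] at hk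
    simp only [Finset.coe_range, Set.mem_Iio]
    by_contra hc; push_neg at hc
    exact hk (hs k (by omega))
  · rw [finsum_eq_S n ε hs, hS]
  · rintro τ ⟨h0, hfin, hle2, hpair, hsum⟩
    have hAτ : Adm τ := ⟨h0, hle2, hpair⟩
    have hsτ : ∀ k, n < k → τ k = 0 := by
      intro j hj
      by_contra hne
      set M := max n (hfin.toFinset.sup id) with hM
      have hbd : ∀ k, τ k ≠ 0 → k ≤ M := fun k hk =>
        le_trans (Finset.le_sup (f := id) (hfin.mem_toFinset.mpr hk)) (le_max_right _ _)
      have hsupM : ∀ k, M < k → τ k = 0 := by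
        intro k hk; by_contra h; exact absurd (hbd k h) (by omega)
      have hsum' : n = S M τ := by rw [hsum, finsum_eq_S M τ hsupM]
      have hjM : j ≤ M := hbd j hne
      have hterm : τ j * Nat.fib (2*j) ≤ S M τ :=
        Finset.single_le_sum (f := fun i => τ i * Nat.fib (2*i))
          (fun i _ => Nat.zero_le _) (Finset.mem_range.mpr (by omega))
      have hfl : Nat.fib (2*j) ≤ τ j * Nat.fib (2*j) :=
        Nat.le_mul_of_pos_left _ (Nat.pos_of_ne_zero hne)
      have hmon : Nat.fib (2*n+2) ≤ Nat.fib (2*j) := Nat.fib_mono (by omega)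
      omega
    have hSτ : S n τ = n := by rw [← finsum_eq_S n τ hsτ, ← hsum]
    exact uniq n τ ε hAτ hsτ hA hs (by rw [hSτ, hS])
end

section
/- Let d be a positive even integer, A = K_d - 1, B = F_{2+d} - 1, and define β^(n) as the coefficient sequence of order n with β^(1) = (B), β^(2) = (B-1, A), and β^(n) = (B-1, A-1, ..., A-1, A) for n ≥ 3. If ε satisfies the Chung–Graham rule of expansion for even interval d and ε_k = 0 for all k > n, then ε ≤ β^(n) in the order where ε < τ iff there is ℓ with ε_ℓ < τ_ℓ and ε_k = τ_k for all k > ℓ. -/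
lemma lucas_pos_s14 : ∀ m, 1 ≤ lucas m
  | 0 => by simp [lucas]
  | 1 => by simp [lucas]
  | (m + 2) => by
    have := lucas_pos_s14 m
    simp only [lucas]; omega

lemma lucas_sum_ge_three : ∀ m, 3 ≤ lucas m + lucas (m + 1)
  | 0 => by simp [lucas]
  | (m + 1) => by
    have h1 := lucas_sum_ge_three m
    have h2 := lucas_pos_s14 (m + 1)
    show 3 ≤ lucas (m + 1) + lucas (m + 2)
    rw [show lucas (m + 2) = lucas (m + 1) + lucas m from rfl]
    omega

lemma lucas_add_self_ge_three (m : ℕ) : 3 ≤ lucas (m + 2) := by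
  have := lucas_sum_ge_three m
  rw [show lucas (m + 2) = lucas (m + 1) + lucas m from rfl]
  omega

theorem stmt_14 (d : ℕ) (hd : 0 < d) (hde : Even d) (n : ℕ) (hn : 1 ≤ n)
    (ε : ℕ → ℕ) (hε : CGRule d ε) (hsupp : ∀ k, n < k → ε k = 0) :
    ε = cgBeta d n ∨ CGlt ε (cgBeta d n) := by
  classical
  obtain ⟨h0, hfin, h1, h2, h3, h4⟩ := hε
  have hd2 : 2 ≤ d := by
    rcases hde with ⟨m, hm⟩; omega
  have hL3 : 3 ≤ lucas d := by
    obtain ⟨m, rfl⟩ : ∃ m, d = m + 2 := ⟨d - 2, by omega⟩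
    exact lucas_add_self_ge_three m
  have hbeta_gt : ∀ k, n < k → cgBeta d n k = 0 := by
    intro k hk
    unfold cgBeta
    split_ifs <;> first | omega | exact absurd ‹False› id
  by_cases hn1 : n = 1
  · subst hn1
    by_cases he : ε 1 = Nat.fib (2 + d) - 1
    · left; funext k
      match k with
      | 0 => simpa [cgBeta] using h0
      | 1 => simpa [cgBeta] using he
      | (k + 2) =>
        rw [hsupp (k + 2) (by omega), hbeta_gt (k + 2) (by omega)]
    · right
      refine ⟨1, ?_, ?_⟩
      · have hb : cgBeta d 1 1 = Nat.fib (2 + d) - 1 := by simp [cgBeta]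
        rw [hb]; omega
      · intro k hk
        rw [hsupp k (by omega), hbeta_gt k (by omega)]
  · have hn2 : 2 ≤ n := by omega
    by_cases heq : ε = cgBeta d n
    · exact Or.inl heq
    right
    have hβ1 : cgBeta d n 1 = Nat.fib (2 + d) - 1 - 1 := by
      simp [cgBeta, hn1]
    have hβn : cgBeta d n n = lucas d - 1 := by
      unfold cgBeta
      split_ifs <;> first | omega | exact absurd ‹False› id
    have hβmid : ∀ k, 2 ≤ k → k ≤ n - 1 → cgBeta d n k = lucas d - 1 - 1 := by
      intro k hk1 hk2
      unfold cgBeta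
      split_ifs <;> first | omega | exact absurd ‹False› id
    have hβ0 : cgBeta d n 0 = 0 := by
      unfold cgBeta
      split_ifs <;> first | omega | exact absurd ‹False› id
    have hex : ∃ k, k ≤ n ∧ ε k ≠ cgBeta d n k := by
      by_contra hc
      push_neg at hc
      apply heq
      funext k
      by_cases hk : k ≤ n
      · exact hc k hk
      · rw [hsupp k (by omega), hbeta_gt k (by omega)]
    obtain ⟨k0, hk0n, hk0⟩ := hex
    obtain ⟨ℓ, hℓle, hℓspec, hgt'⟩ :
        ∃ ℓ, ℓ ≤ n ∧ ε ℓ ≠ cgBeta d n ℓ ∧ ∀ k, ℓ < k → k ≤ n → ε k = cgBeta d n k := by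
      refine ⟨Nat.findGreatest (fun k => ε k ≠ cgBeta d n k) n, Nat.findGreatest_le n,
        Nat.findGreatest_spec (P := fun k => ε k ≠ cgBeta d n k) hk0n hk0, ?_⟩
      intro k hk hkn
      by_contra hc
      exact Nat.findGreatest_is_greatest (P := fun k => ε k ≠ cgBeta d n k) hk hkn hc
    have hgt : ∀ k, ℓ < k → ε k = cgBeta d n k := by
      intro k hk
      by_cases hkn : k ≤ n
      · exact hgt' k hk hkn
      · rw [hsupp k (by omega), hbeta_gt k (by omega)]
    refine ⟨ℓ, ?_, hgt⟩
    have hℓ0 : ℓ ≠ 0 := by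
      intro h; apply hℓspec; rw [h, h0, hβ0]
    rcases eq_or_lt_of_le hℓle with hln | hln
    · -- ℓ = n
      rw [hln, hβn]
      have := h2 n hn2
      have hne : ε n ≠ lucas d - 1 := by rw [← hβn]; rw [hln] at hℓspec; exact hℓspec
      omega
    · -- ℓ < n
      have hεn : ε n = lucas d - 1 := by rw [hgt n hln, hβn]
      by_cases hℓ1 : ℓ = 1
      · subst hℓ1
        have hmid : ∀ k, 2 ≤ k → k ≤ n - 1 → ε k = lucas d - 1 - 1 := by
          intro k hk1 hk2
          rw [hgt k (by omega), hβmid k hk1 hk2]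
        have := h3 n hn2 hεn hmid
        rw [hβ1]
        have hne : ε 1 ≠ Nat.fib (2 + d) - 1 - 1 := by rw [← hβ1]; exact hℓspec
        omega
      · have hℓ2 : 2 ≤ ℓ := by omega
        rw [hβmid ℓ hℓ2 (by omega)]
        have hle : ε ℓ ≤ lucas d - 1 := h2 ℓ hℓ2
        have hne : ε ℓ ≠ lucas d - 1 - 1 := by rw [← hβmid ℓ hℓ2 (by omega)]; exact hℓspec
        by_contra hc
        have hεℓ : ε ℓ = lucas d - 1 := by omega
        obtain ⟨c, hc1, hc2, hc3⟩ := h4 ℓ n hℓ2 hln hεℓ hεn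
        have : ε c = lucas d - 1 - 1 := by
          rw [hgt c hc1, hβmid c (by omega) (by omega)]
        omega
end

section
/- Every positive integer n has a unique representation n = Σ_k ε_k F_k over the Fibonacci sequence with ε_1 = 0, ε_k ∈ {0,1}, only finitely many ε_k nonzero, and ε_k = 1 implying ε_{k+1} = 0 (Zeckendorf's theorem). -/
/-!
A finitely supported `{0,1}`-valued sequence is the indicator of a unique strictly decreasing
list of indices, and the conditions `ε 0 = ε 1 = 0` and "no two consecutive ones" say exactly that
this list is a Zeckendorf representation in Mathlib's sense (`List.IsZeckendorfRep`).
Zeckendorf's theorem for lists (`Nat.sum_zeckendorf_fib`, `Nat.zeckendorf_sum_fib`) then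
transfers to sequences.
-/

namespace List

variable {α : Type*} [DecidableEq α]

def indicator (l : List α) (a : α) : ℕ := if a ∈ l then 1 else 0

@[simp] lemma indicator_eq_zero_iff {l : List α} {a : α} : l.indicator a = 0 ↔ a ∉ l := by
  simp [indicator]

@[simp] lemma indicator_eq_one_iff {l : List α} {a : α} : l.indicator a = 1 ↔ a ∈ l := by
  simp [indicator]

lemma indicator_le_one (l : List α) (a : α) : l.indicator a ≤ 1 := by
  unfold indicator; split_ifs <;> simp

lemma finite_indicator_ne_zero (l : List α) : {a | l.indicator a ≠ 0}.Finite :=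
  l.finite_toSet.subset fun a ha ↦ by simpa using ha

lemma finsum_indicator_mul {l : List α} (hl : l.Nodup) (f : α → ℕ) :
    ∑ᶠ a, l.indicator a * f a = (l.map f).sum := by
  rw [finsum_eq_sum_of_support_subset _ (s := l.toFinset) fun a ha ↦ by
    simpa using left_ne_zero_of_mul ha, ← sum_toFinset _ hl]
  exact Finset.sum_congr rfl fun a ha ↦ by simp [indicator, List.mem_toFinset.1 ha]

lemma isZeckendorfRep_iff_pairwise {l : List ℕ} :
    l.IsZeckendorfRep ↔ l.Pairwise (fun a b ↦ b + 2 ≤ a) ∧ ∀ a ∈ l, 2 ≤ a := by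
  have : Trans (fun a b : ℕ ↦ b + 2 ≤ a) (fun a b ↦ b + 2 ≤ a) (fun a b ↦ b + 2 ≤ a) :=
    ⟨fun hab hbc ↦ by omega⟩
  simp [IsZeckendorfRep, isChain_iff_pairwise, pairwise_append]

lemma IsZeckendorfRep.sortedGT {l : List ℕ} (hl : l.IsZeckendorfRep) : l.SortedGT :=
  sortedGT_iff_pairwise.2 <| (isZeckendorfRep_iff_pairwise.1 hl).1.imp fun h ↦ by omega

lemma isZeckendorfRep_iff_of_sortedGT {l : List ℕ} (hl : l.SortedGT) :
    l.IsZeckendorfRep ↔ 0 ∉ l ∧ 1 ∉ l ∧ ∀ k ∈ l, k + 1 ∉ l := by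
  rw [isZeckendorfRep_iff_pairwise]
  constructor
  · rintro ⟨hpw, hge⟩
    refine ⟨fun h ↦ by simpa using hge 0 h, fun h ↦ by simpa using hge 1 h, fun k hk hk1 ↦ ?_⟩
    have : Std.Symm (fun a b : ℕ ↦ b + 2 ≤ a ∨ a + 2 ≤ b) := ⟨fun _ _ h ↦ h.symm⟩
    have hsep : l.Pairwise (fun a b ↦ b + 2 ≤ a ∨ a + 2 ≤ b) := hpw.imp Or.inl
    have := hsep.forall hk hk1 (by omega)
    omega
  · rintro ⟨h0, h1, hcons⟩
    refine ⟨(sortedGT_iff_pairwise.1 hl).imp_of_mem fun {a b} ha hb hab ↦ ?_, fun a ha ↦ ?_⟩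
    · have : a ≠ b + 1 := by rintro rfl; exact hcons b hb ha
      omega
    · have : a ≠ 0 := by rintro rfl; exact h0 ha
      have : a ≠ 1 := by rintro rfl; exact h1 ha
      omega

end List

lemma exists_sortedGT_indicator_eq {α : Type*} [LinearOrder α] (ε : α → ℕ)
    (hfin : {a | ε a ≠ 0}.Finite) (hle : ∀ a, ε a ≤ 1) :
    ∃ l : List α, l.SortedGT ∧ l.indicator = ε := by
  refine ⟨hfin.toFinset.sort (· ≥ ·), Finset.sortedGT_sort _, funext fun a ↦ ?_⟩
  rcases Nat.le_one_iff_eq_zero_or_eq_one.1 (hle a) with ha | ha <;> simp [List.indicator, ha]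

theorem stmt_18_general (n : ℕ) :
    ∃! ε : ℕ → ℕ,
      ε 0 = 0 ∧ ε 1 = 0 ∧
      {k | ε k ≠ 0}.Finite ∧
      (∀ k, ε k ≤ 1) ∧
      (∀ k, ε k = 1 → ε (k + 1) = 0) ∧
      n = ∑ᶠ k, ε k * Nat.fib k := by
  have hz := Nat.isZeckendorfRep_zeckendorf n
  refine ⟨n.zeckendorf.indicator, ?_, ?_⟩
  · obtain ⟨h0, h1, hcons⟩ := (List.isZeckendorfRep_iff_of_sortedGT hz.sortedGT).1 hz
    refine ⟨by simpa, by simpa, List.finite_indicator_ne_zero _, List.indicator_le_one _,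
      fun k hk ↦ by simp_all, ?_⟩
    rw [List.finsum_indicator_mul hz.sortedGT.nodup, Nat.sum_zeckendorf_fib]
  rintro ε ⟨h0, h1, hfin, hle, hcons, rfl⟩
  obtain ⟨l, hl, rfl⟩ := exists_sortedGT_indicator_eq ε hfin hle
  have hlz : l.IsZeckendorfRep := (List.isZeckendorfRep_iff_of_sortedGT hl).2
    ⟨by simpa using h0, by simpa using h1, fun k hk ↦ by simpa using hcons k (by simpa)⟩
  rw [List.finsum_indicator_mul hl.nodup, Nat.zeckendorf_sum_fib hlz]

theorem stmt_18 (n : ℕ) (hn : 1 ≤ n) :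
    ∃! ε : ℕ → ℕ,
      ε 0 = 0 ∧ ε 1 = 0 ∧
      {k | ε k ≠ 0}.Finite ∧
      (∀ k, ε k ≤ 1) ∧
      (∀ k, ε k = 1 → ε (k + 1) = 0) ∧
      n = ∑ᶠ k, ε k * Nat.fib k :=
  stmt_18_general n
end
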